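/- arXiv:2209.00567 — 11 statements merged into one kernel-verified Lean document; each statement's English description precedes it below -/
import Mathlib

section
/- Let P : Fin N → ℂ be a family of collinear points (all P k lie on a common affine line of the plane), let B ∈ ℂ, and let σ(z) = B + u·conj(z − B) with |u| = 1 be any reflection across a line through B. Then there exists a direct isometry g of the plane such that g(P k) = σ(P k) for all k ∈ Fin N; consequently |g(P k) − B| = |P k − B| for all k. -/
/-! On a line `p₀ + ℝ v` complex conjugation agrees with the direct isometry
`z ↦ a z + (conj p₀ - a p₀)`, where `a` is any unit with `a v = conj v`. A reflection
across a line through `B` is conjugation followed by a direct isometry, so on a collinear set it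
is realised by a direct isometry, and it keeps the distance to `B`. -/

open ComplexConjugate

namespace Complex

theorem exists_norm_eq_one_mul_eq_conj (v : ℂ) : ∃ a : ℂ, ‖a‖ = 1 ∧ a * v = conj v := by
  rcases eq_or_ne v 0 with rfl | hv
  · exact ⟨1, by simp, by simp⟩
  · refine ⟨conj v / v, ?_, div_mul_cancel₀ _ hv⟩
    rw [norm_div, norm_conj, div_self (norm_ne_zero_iff.mpr hv)]

theorem exists_conj_eq_mul_add_of_collinear {s : Set ℂ} (hs : Collinear ℝ s) :
    ∃ a b : ℂ, ‖a‖ = 1 ∧ ∀ z ∈ s, conj z = a * z + b := by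
  obtain ⟨p₀, v, hline⟩ := collinear_iff_exists_forall_eq_smul_vadd s |>.mp hs
  obtain ⟨a, ha, hav⟩ := exists_norm_eq_one_mul_eq_conj v
  refine ⟨a, conj p₀ - a * p₀, ha, fun z hz => ?_⟩
  obtain ⟨t, rfl⟩ := hline z hz
  simp only [vadd_eq_add, real_smul, map_add, map_mul, conj_ofReal]
  linear_combination -(t : ℂ) * hav

end Complex

/-- If all measurement points sensed by a single anchor `B` are collinear, then the
configuration reflected about any line through `B` is realised by a direct isometry
(roto-translation), hence is indistinguishable from the original one. -/
theorem collinear_reflection_realised_by_direct_isometry (N : ℕ) (P : Fin N → ℂ)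
    (hP : Collinear ℝ (Set.range P)) (B u : ℂ) (hu : ‖u‖ = 1) :
    ∃ a b : ℂ, ‖a‖ = 1 ∧
      (∀ k : Fin N, a * P k + b = B + u * (starRingEnd ℂ) (P k - B)) ∧
      (∀ k : Fin N, ‖(a * P k + b) - B‖ = ‖P k - B‖) := by
  obtain ⟨a, b, ha, hconj⟩ := Complex.exists_conj_eq_mul_add_of_collinear hP
  have hreflect : ∀ k, u * a * P k + (u * b + B - u * conj B) = B + u * conj (P k - B) := by
    intro k
    rw [map_sub, hconj _ (Set.mem_range_self k)]
    ring
  refine ⟨u * a, u * b + B - u * conj B, by rw [norm_mul, hu, ha, one_mul], hreflect,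
    fun k => ?_⟩
  rw [hreflect k, add_sub_cancel_left, norm_mul, hu, one_mul, Complex.norm_conj]
end

section
/- Let P₀, P₁, P₂ ∈ ℂ be non-collinear points, let B ∈ ℂ, and let g be a direct isometry of the plane such that |g(P k) − B| = |P k − B| for k = 0, 1, 2. Then g(B) = B, i.e. g is a rotation about B. -/
/-!
Write `g z = a z + b`. Since `g` is an isometry, `|g P - B| = |P - g⁻¹ B|`, so every measurement
point is equidistant from `B` and `g⁻¹ B`. If these differ, all measurement points lie on their
perpendicular bisector, a line of the plane, contradicting non-collinearity; hence `g⁻¹ B = B`.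
-/

open Module

theorem AffineSubspace.collinear_perpBisector {V P : Type*} [NormedAddCommGroup V]
    [InnerProductSpace ℝ V] [MetricSpace P] [NormedAddTorsor V P] (hV : finrank ℝ V = 2)
    {p₁ p₂ : P} (h : p₁ ≠ p₂) : Collinear ℝ (perpBisector p₁ p₂ : Set P) := by
  have : Fact (finrank ℝ V = 1 + 1) := ⟨hV⟩
  have : FiniteDimensional ℝ V := .of_fact_finrank_eq_succ 1
  rw [collinear_iff_finrank_le_one, ← direction_eq_vectorSpan, direction_perpBisector,
    Submodule.finrank_orthogonal_span_singleton (n := 1) (vsub_ne_zero.mpr h.symm)]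

theorem Complex.dist_mul_add_of_mul_add_eq {a : ℂ} (ha : ‖a‖ = 1) {b w w' : ℂ} (hw : a * w' + b = w)
    (z : ℂ) : dist (a * z + b) w = dist z w' := by
  rw [← hw, dist_add_right, dist_eq_norm, ← mul_sub, norm_mul, ha, one_mul, dist_eq_norm]

/-- A direct isometry of the plane preserving the distances of three non-collinear
points from an anchor `B` must fix `B`, i.e. it is a rotation about `B`. -/
theorem three_noncollinear_measurements_rotation_about_anchor
    (P0 P1 P2 B : ℂ) (hnc : ¬ Collinear ℝ ({P0, P1, P2} : Set ℂ))
    (g : ℂ → ℂ) (hg : ∃ a b : ℂ, ‖a‖ = 1 ∧ g = fun z => a * z + b)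
    (h0 : ‖g P0 - B‖ = ‖P0 - B‖)
    (h1 : ‖g P1 - B‖ = ‖P1 - B‖)
    (h2 : ‖g P2 - B‖ = ‖P2 - B‖) :
    g B = B := by
  obtain ⟨a, b, ha, rfl⟩ := hg
  obtain ⟨B', hB'⟩ : ∃ B', a * B' + b = B := by
    have ha₀ : a ≠ 0 := norm_ne_zero_iff.mp (ha ▸ one_ne_zero)
    exact ⟨(B - b) / a, by field_simp; ring⟩
  have equidistant : ∀ P, ‖a * P + b - B‖ = ‖P - B‖ → P ∈ AffineSubspace.perpBisector B B' := by
    intro P hP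
    rw [← dist_eq_norm, ← dist_eq_norm, Complex.dist_mul_add_of_mul_add_eq ha hB'] at hP
    exact AffineSubspace.mem_perpBisector_iff_dist_eq.mpr hP.symm
  by_cases hB : B = B'
  · simpa only [← hB] using hB'
  · refine (hnc <| (AffineSubspace.collinear_perpBisector Complex.finrank_real_complex hB).subset ?_).elim
    rintro P (rfl | rfl | rfl)
    exacts [equidistant _ h0, equidistant _ h1, equidistant _ h2]
end

section
/- Let B, P₀, P₁ ∈ ℂ with P₀ ≠ P₁ and B, P₀, P₁ collinear. If Q₀, Q₁ ∈ ℂ satisfy |Q₀ − B| = |P₀ − B|, |Q₁ − B| = |P₁ − B| and |Q₁ − Q₀| = |P₁ − P₀|, then there exists a ∈ ℂ with |a| = 1 such that Qᵢ − B = a·(Pᵢ − B) for i = 0, 1; i.e. the pair (Q₀, Q₁) is obtained from (P₀, P₁) by a rotation about B, and the reflection ambiguity of the generic two-measurement case disappears. -/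
/-!
After translating the anchor to the origin, collinearity makes one measurement vector a real
multiple `t` of the other, nonzero one `p`. The distance constraints give `‖q‖ = ‖p‖`,
`‖q'‖ = |t| ‖p‖` and `‖q' - q‖ = |t - 1| ‖p‖`, and by polarization these force `q' = t q`,
which leaves no room for a reflection; the rotation is `q / p`.
-/

theorem Collinear.exists_vsub_eq_smul_vsub {k V P : Type*} [DivisionRing k] [AddCommGroup V]
    [Module k V] [AddTorsor V P] {b p₁ p₂ : P} (h : Collinear k ({b, p₁, p₂} : Set P))
    (hp₁ : p₁ ≠ b) : ∃ r : k, p₂ -ᵥ b = r • (p₁ -ᵥ b) := by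
  have hp₂ : p₂ ∈ line[k, b, p₁] :=
    h.mem_affineSpan_of_mem_of_ne (by simp) (by simp) (by simp) hp₁.symm
  rw [← vsub_vadd p₂ b, vadd_left_mem_affineSpan_pair] at hp₂
  obtain ⟨r, hr⟩ := hp₂
  exact ⟨r, hr.symm⟩

theorem eq_smul_of_norm_eq_of_norm_sub_eq {F : Type*} [NormedAddCommGroup F]
    [InnerProductSpace ℝ F] {x y : F} {t : ℝ} (hy : ‖y‖ = |t| * ‖x‖)
    (hyx : ‖y - x‖ = |t - 1| * ‖x‖) : y = t • x := by
  have hy2 : ‖y‖ ^ 2 = t ^ 2 * ‖x‖ ^ 2 := by rw [hy, mul_pow, sq_abs]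
  have hyx2 : ‖y - x‖ ^ 2 = (t - 1) ^ 2 * ‖x‖ ^ 2 := by rw [hyx, mul_pow, sq_abs]
  have hinner : inner ℝ y x = t * ‖x‖ ^ 2 := by
    rw [norm_sub_sq_real, hy2] at hyx2
    linear_combination -hyx2 / 2
  have hzero : ‖y - t • x‖ ^ 2 = 0 := by
    rw [norm_sub_sq_real, inner_smul_right, norm_smul, Real.norm_eq_abs, mul_pow, sq_abs, hy2,
      hinner]
    ring
  rwa [sq_eq_zero_iff, norm_eq_zero, sub_eq_zero] at hzero

theorem Complex.exists_norm_eq_one_of_eq_ofReal_mul {p p' q q' : ℂ} {t : ℝ} (hp : p ≠ 0)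
    (hp' : p' = t * p) (hq : ‖q‖ = ‖p‖) (hq' : ‖q'‖ = ‖p'‖) (hqq' : ‖q' - q‖ = ‖p' - p‖) :
    ∃ a : ℂ, ‖a‖ = 1 ∧ q = a * p ∧ q' = a * p' := by
  have hq't : q' = t * q := by
    rw [← Complex.real_smul]
    refine eq_smul_of_norm_eq_of_norm_sub_eq ?_ ?_
    · rw [hq', hp', norm_mul, Complex.norm_real, Real.norm_eq_abs, hq]
    · rw [hqq', hp', ← sub_one_mul, norm_mul, ← Complex.ofReal_one, ← Complex.ofReal_sub,
        Complex.norm_real, Real.norm_eq_abs, hq]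
  refine ⟨q / p, ?_, (div_mul_cancel₀ q hp).symm, ?_⟩
  · rw [norm_div, hq, div_self (norm_ne_zero_iff.mpr hp)]
  · rw [hq't, hp']
    field_simp

/-- When the two measurement points are collinear with the anchor (diameter case),
the reflection ambiguity disappears: any compatible pair of points is obtained by a
rotation about the anchor. -/
theorem diameter_case_only_rotation (B P0 P1 Q0 Q1 : ℂ)
    (hne : P0 ≠ P1) (hcol : Collinear ℝ ({B, P0, P1} : Set ℂ))
    (h0 : ‖Q0 - B‖ = ‖P0 - B‖)
    (h1 : ‖Q1 - B‖ = ‖P1 - B‖)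
    (h01 : ‖Q1 - Q0‖ = ‖P1 - P0‖) :
    ∃ a : ℂ, ‖a‖ = 1 ∧ Q0 - B = a * (P0 - B) ∧ Q1 - B = a * (P1 - B) := by
  have h01' : ‖(Q1 - B) - (Q0 - B)‖ = ‖(P1 - B) - (P0 - B)‖ := by
    rwa [sub_sub_sub_cancel_right, sub_sub_sub_cancel_right]
  rcases eq_or_ne P0 B with rfl | hP0
  · obtain ⟨a, ha, h1a, h0a⟩ := Complex.exists_norm_eq_one_of_eq_ofReal_mul (t := 0)
      (sub_ne_zero.mpr hne.symm) (by simp) h1 h0 (by rw [norm_sub_rev, h01', norm_sub_rev])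
    exact ⟨a, ha, h0a, h1a⟩
  · obtain ⟨t, ht⟩ := hcol.exists_vsub_eq_smul_vsub hP0
    rw [vsub_eq_sub, vsub_eq_sub, Complex.real_smul] at ht
    exact Complex.exists_norm_eq_one_of_eq_ofReal_mul (sub_ne_zero.mpr hP0) ht h0 h1 h01'
end

section
/- Let B₁ ≠ B₂ ∈ ℂ, let d ∈ ℂ, d ≠ 0, and let ℓ = {B₁ + t·d : t ∈ ℝ} be a line through B₁ that is different from the line through B₁ and B₂ (i.e. d is not a real multiple of B₂ − B₁). Then there exists a rotation R about B₁ with R ≠ id such that |R(P) − B₂| = |P − B₂| for every P ∈ ℓ. -/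
/-!
Work in coordinates centred at `B₁`, so that `B₂` becomes `w = B₂ - B₁`. The rotation by twice
the angle between `ℓ` and the line `B₁B₂` is the reflection in `ℓ` followed by the reflection in
`B₁B₂`. The first reflection fixes `ℓ` pointwise; the second is an isometry fixing `B₂`; so the
composite moves no point of `ℓ` nearer to or farther from `B₂`. It is the identity only when the
two lines coincide.
-/

open ComplexConjugate

/-- Reflection of `ℂ` in the line `ℝ • w`. -/
noncomputable def reflectLine (w z : ℂ) : ℂ := w / conj w * conj z

lemma norm_div_conj_self {w : ℂ} (hw : w ≠ 0) : ‖w / conj w‖ = 1 := by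
  rw [norm_div, Complex.norm_conj, div_self (norm_ne_zero_iff.mpr hw)]

lemma norm_reflectLine_sub_reflectLine {w : ℂ} (hw : w ≠ 0) (z z' : ℂ) :
    ‖reflectLine w z - reflectLine w z'‖ = ‖z - z'‖ := by
  rw [reflectLine, reflectLine, ← mul_sub, ← map_sub, norm_mul, norm_div_conj_self hw, one_mul,
    Complex.norm_conj]

lemma reflectLine_ofReal_mul_self {w : ℂ} (hw : w ≠ 0) (t : ℝ) :
    reflectLine w (t * w) = t * w := by
  have hw' : conj w ≠ 0 := (map_ne_zero _).mpr hw
  rw [reflectLine, map_mul, Complex.conj_ofReal]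
  field_simp

lemma reflectLine_reflectLine (v w z : ℂ) :
    reflectLine w (reflectLine v z) = w / conj w / (v / conj v) * z := by
  simp only [reflectLine, map_mul, map_div₀, Complex.conj_conj, div_div_eq_mul_div]
  ring

lemma norm_rotation_mul_sub_self {v w : ℂ} (hv : v ≠ 0) (hw : w ≠ 0) (t : ℝ) :
    ‖w / conj w / (v / conj v) * (t * v) - w‖ = ‖t * v - w‖ := by
  calc ‖w / conj w / (v / conj v) * (t * v) - w‖
      = ‖reflectLine w (reflectLine v (t * v)) - reflectLine w (1 * w)‖ := by
        rw [reflectLine_reflectLine, ← Complex.ofReal_one, reflectLine_ofReal_mul_self hw,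
          Complex.ofReal_one, one_mul]
    _ = ‖t * v - w‖ := by
        rw [reflectLine_ofReal_mul_self hv, norm_reflectLine_sub_reflectLine hw, one_mul]

lemma exists_ofReal_mul_of_div_conj_eq {v w : ℂ} (hv : v ≠ 0) (hw : w ≠ 0)
    (h : v / conj v = w / conj w) : ∃ t : ℝ, v = t * w := by
  have hv' : conj v ≠ 0 := (map_ne_zero _).mpr hv
  have hw' : conj w ≠ 0 := (map_ne_zero _).mpr hw
  have hcross : v * conj w = conj v * w := by
    rw [div_eq_div_iff hv' hw'] at h
    linear_combination h
  -- `v * conj w` is real, and `v = (v * conj w) * w / ‖w‖²`.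
  have hreal : conj (v * conj w) = v * conj w := by
    rw [map_mul, Complex.conj_conj, hcross, mul_comm]
  obtain ⟨r, hr⟩ := Complex.conj_eq_iff_real.mp hreal
  refine ⟨r / Complex.normSq w, ?_⟩
  have hn : (Complex.normSq w : ℂ) ≠ 0 := by exact_mod_cast Complex.normSq_pos.mpr hw |>.ne'
  rw [Complex.ofReal_div, ← hr, Complex.normSq_eq_conj_mul_self]
  field_simp

/-- If all measurement points sensed by a second anchor `B₂` lie on a line through the
first anchor `B₁` distinct from the line `B₁B₂`, then some non-identity rotation about
`B₁` preserves all range measurements from `B₂` for points of that line. -/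
theorem rotation_example_indistinguishable (B1 B2 : ℂ) (hB : B1 ≠ B2)
    (d : ℂ) (hd : d ≠ 0) (hdir : ∀ t : ℝ, d ≠ (t : ℂ) * (B2 - B1)) :
    ∃ a : ℂ, ‖a‖ = 1 ∧ (fun z => B1 + a * (z - B1)) ≠ (id : ℂ → ℂ) ∧
      ∀ P : ℂ, (∃ t : ℝ, P = B1 + (t : ℂ) * d) →
        ‖(B1 + a * (P - B1)) - B2‖ = ‖P - B2‖ := by
  have hw : B2 - B1 ≠ 0 := sub_ne_zero.mpr hB.symm
  refine ⟨(B2 - B1) / conj (B2 - B1) / (d / conj d), ?_, ?_, ?_⟩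
  · rw [norm_div, norm_div_conj_self hw, norm_div_conj_self hd, div_one]
  · intro hid
    have ha : (B2 - B1) / conj (B2 - B1) / (d / conj d) = 1 := by
      simpa using congrFun hid (B1 + 1)
    have hd' : d / conj d ≠ 0 := div_ne_zero hd ((map_ne_zero _).mpr hd)
    obtain ⟨t, ht⟩ :=
      exists_ofReal_mul_of_div_conj_eq hd hw ((div_eq_one_iff_eq hd').mp ha).symm
    exact hdir t ht
  · rintro P ⟨t, rfl⟩
    convert norm_rotation_mul_sub_self hd hw t using 2 <;> ring
end

section
/- Let B₁ ≠ B₂ ∈ ℂ and let P₀ = B₁ + t₀·(B₂ − B₁), P₁ = B₁ + t₁·(B₂ − B₁) with 0 ≤ t₀ < t₁ ≤ 1 (so that B₁, P₀, P₁, B₂ lie on the segment from B₁ to B₂ in this order). If Q₀, Q₁ ∈ ℂ satisfy |Q₀ − B₁| = |P₀ − B₁|, |Q₁ − B₂| = |P₁ − B₂| and |Q₁ − Q₀| = |P₁ − P₀|, then Q₀ = P₀ and Q₁ = P₁. In particular, the only direct isometry g of the plane with |g(P₀) − B₁| = |P₀ − B₁| and |g(P₁) − B₂| = |P₁ − B₂|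 is the identity. -/
/-!
The three prescribed lengths `‖P₀ - B₁‖`, `‖P₁ - P₀‖`, `‖B₂ - P₁‖` add up to `‖B₂ - B₁‖`, so for
`Q₀, Q₁` the triangle inequalities along `B₁, Q₀, Q₁, B₂` are equalities; in the strictly convex
plane this puts `Q₀` and `Q₁` on the segment `[B₁, B₂]` at the positions of `P₀` and `P₁`.
A direct isometry compatible with the measurements therefore fixes the distinct points `P₀`, `P₁`,
and an affine map `z ↦ a z + b` fixing two distinct points is the identity.
-/

open AffineMap (lineMap)

section StrictConvex

variable {E P : Type*} [NormedAddCommGroup E] [NormedSpace ℝ E] [StrictConvexSpace ℝ E]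
  [MetricSpace P] [NormedAddTorsor E P]

theorem eq_lineMap_and_eq_lineMap_of_dist_eq_mul {x y z w : P} {r s : ℝ}
    (hxy : dist x y = r * dist x w) (hyz : dist y z = (s - r) * dist x w)
    (hzw : dist z w = (1 - s) * dist x w) :
    y = lineMap x w r ∧ z = lineMap x w s := by
  have hyw : dist y w = (1 - r) * dist x w := by
    linarith [dist_triangle x y w, dist_triangle y z w]
  have hxz : dist x z = s * dist x w := by
    linarith [dist_triangle x z w, dist_triangle x y z]
  exact ⟨eq_lineMap_of_dist_eq_mul_of_dist_eq_mul hxy hyw,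
    eq_lineMap_of_dist_eq_mul_of_dist_eq_mul hxz hzw⟩

theorem eq_lineMap_and_eq_lineMap_of_dist_eq_dist {x y z w : P} {r s : ℝ}
    (hr : 0 ≤ r) (hrs : r ≤ s) (hs : s ≤ 1)
    (hxy : dist x y = dist x (lineMap x w r))
    (hyz : dist y z = dist (lineMap x w r) (lineMap x w s))
    (hzw : dist z w = dist (lineMap x w s) w) :
    y = lineMap x w r ∧ z = lineMap x w s := by
  rw [dist_left_lineMap, Real.norm_of_nonneg hr] at hxy
  rw [dist_lineMap_lineMap, Real.dist_eq, abs_sub_comm, abs_of_nonneg (sub_nonneg.2 hrs)] at hyz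
  rw [dist_lineMap_right, Real.norm_of_nonneg (sub_nonneg.2 hs)] at hzw
  exact eq_lineMap_and_eq_lineMap_of_dist_eq_mul hxy hyz hzw

end StrictConvex

theorem eq_id_of_mul_add_fixes_two {R : Type*} [CommRing R] [NoZeroDivisors R] {a b p q : R}
    (hpq : p ≠ q) (hp : a * p + b = p) (hq : a * q + b = q) :
    (fun z => a * z + b) = id := by
  have ha : a = 1 := by
    refine mul_right_cancel₀ (sub_ne_zero.2 hpq.symm) ?_
    linear_combination hq - hp
  have hb : b = 0 := by
    rw [ha, one_mul] at hp
    linear_combination hp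
  funext z
  simp [ha, hb]

theorem Complex.lineMap_real_eq (a b : ℂ) (t : ℝ) : lineMap a b t = a + t * (b - a) := by
  rw [AffineMap.lineMap_apply, vsub_eq_sub, vadd_eq_add, Complex.real_smul, add_comm]

/-- Degenerate 1+1 case: if the two measurement points lie, in order, on the segment
joining the two anchors, the trajectory is uniquely determined (`Ind(1)`), and the
only compatible direct isometry is the identity. -/
theorem degenerate_one_plus_one_unique (B1 B2 : ℂ) (hB : B1 ≠ B2)
    (t0 t1 : ℝ) (ht0 : 0 ≤ t0) (ht01 : t0 < t1) (ht1 : t1 ≤ 1)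
    (P0 P1 : ℂ) (hP0 : P0 = B1 + (t0 : ℂ) * (B2 - B1)) (hP1 : P1 = B1 + (t1 : ℂ) * (B2 - B1)) :
    (∀ Q0 Q1 : ℂ,
      ‖Q0 - B1‖ = ‖P0 - B1‖ →
      ‖Q1 - B2‖ = ‖P1 - B2‖ →
      ‖Q1 - Q0‖ = ‖P1 - P0‖ →
      Q0 = P0 ∧ Q1 = P1) ∧
    (∀ g : ℂ → ℂ, (∃ a b : ℂ, ‖a‖ = 1 ∧ g = fun z => a * z + b) →
      ‖g P0 - B1‖ = ‖P0 - B1‖ →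
      ‖g P1 - B2‖ = ‖P1 - B2‖ →
      g = id) := by
  rw [← Complex.lineMap_real_eq] at hP0 hP1
  subst hP0 hP1
  have rigid : ∀ Q0 Q1 : ℂ, ‖Q0 - B1‖ = ‖lineMap B1 B2 t0 - B1‖ →
      ‖Q1 - B2‖ = ‖lineMap B1 B2 t1 - B2‖ →
      ‖Q1 - Q0‖ = ‖lineMap B1 B2 t1 - lineMap B1 B2 t0‖ →
      Q0 = lineMap B1 B2 t0 ∧ Q1 = lineMap B1 B2 t1 := by
    intro Q0 Q1 h0 h1 h01
    simp only [← dist_eq_norm] at h0 h1 h01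
    rw [dist_comm Q0, dist_comm (lineMap B1 B2 t0)] at h0
    rw [dist_comm Q1, dist_comm (lineMap B1 B2 t1)] at h01
    exact eq_lineMap_and_eq_lineMap_of_dist_eq_dist ht0 ht01.le ht1 h0 h01 h1
  refine ⟨rigid, ?_⟩
  rintro g ⟨a, b, ha, rfl⟩ hg0 hg1
  have hiso : ‖(a * lineMap B1 B2 t1 + b) - (a * lineMap B1 B2 t0 + b)‖
      = ‖lineMap B1 B2 t1 - lineMap B1 B2 t0‖ := by
    rw [add_sub_add_right_eq_sub, ← mul_sub, norm_mul, ha, one_mul]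
  obtain ⟨e0, e1⟩ := rigid _ _ hg0 hg1 hiso
  exact eq_id_of_mul_add_fixes_two ((AffineMap.lineMap_injective ℝ hB).ne ht01.ne) e0 e1
end

section
/- Let B₁ ≠ B₂ ∈ ℂ and let P ∈ ℂ be a point not lying on the line through B₁ and B₂. Then there exists a direct isometry g of the plane with g ≠ id such that g(B₁) = B₁ (hence |g(Q) − B₁| = |Q − B₁| for every Q ∈ ℂ, so every range measurement taken from B₁ is preserved) and |g(P) − B₂| = |P − B₂|. -/
/-!
Let `σ` be the reflection in the line `B₁B₂`. Since `B₁` lies on the line, `σ P` is as far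
from `B₁` as `P` is, so some rotation about `B₁` carries `P` to `σ P`; since `B₂` lies on the
line too, `σ P` is as far from `B₂` as `P` is. The rotation is not the identity because `P` is
off the line, so `σ P ≠ P`.
-/

open EuclideanGeometry

def rotationAbout (c a : ℂ) (z : ℂ) : ℂ := a * (z - c) + c

section rotationAbout

variable {c a : ℂ}

theorem rotationAbout_eq (c a : ℂ) : rotationAbout c a = fun z => a * z + (c - a * c) := by
  funext z
  simp only [rotationAbout]
  ring

@[simp]
theorem rotationAbout_self (c a : ℂ) : rotationAbout c a c = c := by
  simp [rotationAbout]

theorem norm_rotationAbout_sub (ha : ‖a‖ = 1) (z : ℂ) :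
    ‖rotationAbout c a z - c‖ = ‖z - c‖ := by
  simp [rotationAbout, ha]

theorem exists_norm_eq_one_rotationAbout_apply_eq {x y : ℂ} (hx : x ≠ c)
    (h : ‖y - c‖ = ‖x - c‖) : ∃ a : ℂ, ‖a‖ = 1 ∧ rotationAbout c a x = y := by
  have hx' : x - c ≠ 0 := sub_ne_zero.mpr hx
  refine ⟨(y - c) / (x - c), ?_, ?_⟩
  · rw [norm_div, h, div_self (norm_ne_zero_iff.mpr hx')]
  · simp [rotationAbout, div_mul_cancel₀ _ hx']

end rotationAbout

theorem n_minus_one_plus_one_unconstructible_general (B1 B2 P : ℂ)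
    (hnc : ¬ Collinear ℝ ({B1, B2, P} : Set ℂ)) :
    ∃ g : ℂ → ℂ, (∃ a b : ℂ, ‖a‖ = 1 ∧ g = fun z => a * z + b) ∧
      g ≠ id ∧ g B1 = B1 ∧
      (∀ Q : ℂ, ‖g Q - B1‖ = ‖Q - B1‖) ∧
      ‖g P - B2‖ = ‖P - B2‖ := by
  set σ := reflection line[ℝ, B1, B2]
  have hB1 : B1 ∈ line[ℝ, B1, B2] := left_mem_affineSpan_pair ℝ B1 B2
  have hB2 : B2 ∈ line[ℝ, B1, B2] := right_mem_affineSpan_pair ℝ B1 B2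
  have hP : P ∉ line[ℝ, B1, B2] := fun hP =>
    hnc (collinear_triple_of_mem_affineSpan_pair hB1 hB2 hP)
  have hσP : σ P ≠ P := fun h => hP ((reflection_eq_self_iff P).mp h)
  have hPB1 : P ≠ B1 := fun h => hP (h ▸ hB1)
  have hσB1 : ‖σ P - B1‖ = ‖P - B1‖ := by
    simpa only [Complex.dist_eq, norm_sub_rev _ B1] using dist_reflection_eq_of_mem _ hB1 P
  have hσB2 : ‖σ P - B2‖ = ‖P - B2‖ := by
    simpa only [Complex.dist_eq, norm_sub_rev _ B2] using dist_reflection_eq_of_mem _ hB2 P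
  obtain ⟨a, ha, hgP⟩ := exists_norm_eq_one_rotationAbout_apply_eq hPB1 hσB1
  refine ⟨rotationAbout B1 a, ⟨a, B1 - a * B1, ha, rotationAbout_eq B1 a⟩, ?_,
    rotationAbout_self B1 a, norm_rotationAbout_sub ha, hgP ▸ hσB2⟩
  intro hid
  exact hσP (by rw [← hgP, hid, id])

/-- Negative `(N_m - 1)+1` result: if the single measurement point `P` sensed by the
second anchor is not aligned with the two anchors, there is a non-identity direct
isometry fixing `B₁` (hence preserving every measurement from `B₁`) that also
preserves the measurement of `P` from `B₂`. -/
theorem n_minus_one_plus_one_unconstructible (B1 B2 P : ℂ) (hB : B1 ≠ B2)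
    (hnc : ¬ Collinear ℝ ({B1, B2, P} : Set ℂ)) :
    ∃ g : ℂ → ℂ, (∃ a b : ℂ, ‖a‖ = 1 ∧ g = fun z => a * z + b) ∧
      g ≠ id ∧ g B1 = B1 ∧
      (∀ Q : ℂ, ‖g Q - B1‖ = ‖Q - B1‖) ∧
      ‖g P - B2‖ = ‖P - B2‖ :=
  n_minus_one_plus_one_unconstructible_general B1 B2 P hnc
end

section
/- Let B₁ ≠ B₂ ∈ ℂ, let P₀, P₁, P₂ ∈ ℂ be non-collinear, and let P₃ ∈ ℂ with P₃ ≠ B₁ lie on the line through B₁ and B₂. If g is a direct isometry of the plane such that |g(P k) − B₁| = |P k − B₁| for k = 0, 1, 2 and |g(P₃) − B₂| = |P₃ − B₂|, then g = id. -/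
/-!
Since `g` is an isometry, `‖g P - B₁‖ = dist P (g⁻¹ B₁)`, so the three conditions at `B₁` say that
`P₀, P₁, P₂` are equidistant from `B₁` and `g⁻¹ B₁`. Non-collinear points span the plane, hence
`g B₁ = B₁`. Then `g P₃` lies on the circles about `B₁` and `B₂` through `P₃`; these are tangent at
`P₃` because `P₃` is on the line of centres, so `g P₃ = P₃`. A direct isometry fixing two distinct
points is the identity.
-/

open Module

theorem affineSpan_eq_top_of_not_collinear {k V P : Type*} [DivisionRing k] [AddCommGroup V]
    [Module k V] [AddTorsor V P] [FiniteDimensional k V] (h2 : finrank k V = 2) {p₁ p₂ p₃ : P}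
    (h : ¬Collinear k ({p₁, p₂, p₃} : Set P)) : affineSpan k ({p₁, p₂, p₃} : Set P) = ⊤ := by
  have hi := (affineIndependent_iff_not_collinear_set.2 h).affineSpan_eq_top_iff_card_eq_finrank_add_one
    |>.2 (by simp [h2])
  simp_rw [Matrix.range_cons, Matrix.range_empty, Set.singleton_union, insert_empty_eq] at hi
  exact hi

section Euclidean

variable {V P : Type*} [NormedAddCommGroup V] [InnerProductSpace ℝ V] [MetricSpace P]
  [NormedAddTorsor V P]

theorem eq_of_forall_dist_eq_of_affineSpan_eq_top {s : Set P} (hs : affineSpan ℝ s = ⊤)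
    {x y : P} (h : ∀ p ∈ s, dist p x = dist p y) : x = y := by
  rw [← AffineSubspace.perpBisector_eq_top, eq_top_iff, ← hs, affineSpan_le]
  exact fun p hp => AffineSubspace.mem_perpBisector_iff_dist_eq.2 (h p hp)

theorem eq_of_dist_eq_of_dist_eq_of_mem_affineSpan_pair {c₁ c₂ x y : P} (hc : c₁ ≠ c₂)
    (hline : c₂ ∈ line[ℝ, c₁, y]) (h₁ : dist x c₁ = dist y c₁) (h₂ : dist x c₂ = dist y c₂) :
    x = y := by
  obtain ⟨r, rfl⟩ := mem_affineSpan_pair_iff_exists_lineMap_eq.1 hline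
  have hr : r ≠ 0 := by rintro rfl; simp at hc
  rw [dist_eq_norm_vsub V, dist_eq_norm_vsub V] at h₁ h₂
  rw [AffineMap.lineMap_apply] at h₂
  set u := x -ᵥ c₁
  set w := y -ᵥ c₁
  have hx : x -ᵥ (r • w +ᵥ c₁) = u - r • w := by rw [vsub_vadd_eq_vsub_sub]
  have hy : y -ᵥ (r • w +ᵥ c₁) = w - r • w := by rw [vsub_vadd_eq_vsub_sub]
  rw [hx, hy] at h₂
  have hinner : inner ℝ u w = ‖w‖ ^ 2 := by
    have := congrArg (· ^ 2) h₂
    simp only [norm_sub_sq_real, norm_smul, inner_smul_right, real_inner_self_eq_norm_sq, h₁] at this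
    exact mul_left_cancel₀ hr (by linarith)
  have huw : ‖u - w‖ ^ 2 = 0 := by
    rw [norm_sub_sq_real, hinner, h₁]; ring
  rw [← vsub_eq_zero_iff_eq, ← vsub_sub_vsub_cancel_right x y c₁]
  exact norm_eq_zero.1 (pow_eq_zero_iff two_ne_zero |>.1 huw)

end Euclidean

theorem Complex.dist_mul_add_mul_add {a : ℂ} (ha : ‖a‖ = 1) (b z w : ℂ) :
    dist (a * z + b) (a * w + b) = dist z w := by
  rw [dist_eq_norm, dist_eq_norm, add_sub_add_right_eq_sub, ← mul_sub, norm_mul, ha, one_mul]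

theorem Complex.mul_add_eq_id_of_fixes {a b p q : ℂ} (hpq : p ≠ q) (hp : a * p + b = p)
    (hq : a * q + b = q) : (fun z => a * z + b) = id := by
  have ha : a = 1 := mul_right_cancel₀ (sub_ne_zero.2 hpq) (by linear_combination hp - hq)
  subst ha
  funext z
  simp only [id]
  linear_combination hp

/-- Degenerate 3+1 case: three non-collinear points sensed by `B₁` and a fourth point,
distinct from `B₁`, on the line through the anchors sensed by `B₂`, force the only
compatible direct isometry to be the identity. -/
theorem degenerate_three_plus_one_unique (B1 B2 : ℂ) (hB : B1 ≠ B2)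
    (P0 P1 P2 : ℂ) (hnc : ¬ Collinear ℝ ({P0, P1, P2} : Set ℂ))
    (P3 : ℂ) (hP3 : P3 ≠ B1) (hline : Collinear ℝ ({B1, B2, P3} : Set ℂ))
    (g : ℂ → ℂ) (hg : ∃ a b : ℂ, ‖a‖ = 1 ∧ g = fun z => a * z + b)
    (h0 : ‖g P0 - B1‖ = ‖P0 - B1‖)
    (h1 : ‖g P1 - B1‖ = ‖P1 - B1‖)
    (h2 : ‖g P2 - B1‖ = ‖P2 - B1‖)
    (h3 : ‖g P3 - B2‖ = ‖P3 - B2‖) :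
    g = id := by
  obtain ⟨a, b, ha, rfl⟩ := hg
  have ha0 : a ≠ 0 := norm_ne_zero_iff.1 (ha ▸ one_ne_zero)
  have hq : a * ((B1 - b) / a) + b = B1 := by field_simp; ring
  have hB1 : a * B1 + b = B1 := by
    suffices (B1 - b) / a = B1 by rwa [this] at hq
    refine eq_of_forall_dist_eq_of_affineSpan_eq_top
      (affineSpan_eq_top_of_not_collinear Complex.finrank_real_complex hnc) ?_
    rintro p (rfl | rfl | rfl) <;>
      rw [← Complex.dist_mul_add_mul_add ha b, hq, dist_eq_norm, dist_eq_norm] <;> assumption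
  have hP3fix : a * P3 + b = P3 := by
    refine eq_of_dist_eq_of_dist_eq_of_mem_affineSpan_pair hB
      (hline.mem_affineSpan_of_mem_of_ne (by simp) (by simp) (by simp) hP3.symm) ?_ ?_
    · rw [← Complex.dist_mul_add_mul_add ha b P3 B1, hB1]
    · rwa [dist_eq_norm, dist_eq_norm]
  exact Complex.mul_add_eq_id_of_fixes hP3 hP3fix hB1
end

section
/- Let B = (X, Y) ∈ ℝ² be an anchor, P_f = (x_f, y_f) ∈ ℝ² a final point, and P = (x, y) ∈ ℝ² a measurement point with P ≠ B. Then the vector v = (−(y_f − Y), x_f − X, 1) ∈ ℝ³ satisfies ⟨γ(B, P, P_f), v⟩ = 0. Consequently, for any finite family of measurement points P k ≠ B all sensed by the same anchor B, the Gramian G = Σ_k γ(B, P k, P_f)·γ(B, P k, P_f)ᵀ is a singular 3×3 matrix (the nonzero vector v lies in its kernel). -/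
/-! Every information vector of anchor `B` is orthogonal to the fixed vector
`(-(y_f - Y), x_f - X, 1)`: after clearing the common factor `1 / r` this is the identity
`(x - X)(Y - y_f) + (y - Y)(x_f - X) + (x_f - x)(Y - y) - (y_f - y)(X - x) = 0`.
A sum of rank-one matrices `u uᵀ` kills every vector orthogonal to all the `u`, so this
nonzero vector lies in the kernel of the Gramian. -/

/-- The rank-one information vector of a single range measurement from anchor `B`
taken at point `P`, for final point `Pf` (plane identified with Euclidean `ℝ²`). -/
noncomputable def gamma (B P Pf : EuclideanSpace ℝ (Fin 2)) : Fin 3 → ℝ :=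
  ![(P 0 - B 0) / ‖P - B‖,
    (P 1 - B 1) / ‖P - B‖,
    ((Pf 0 - P 0) * (B 1 - P 1) - (Pf 1 - P 1) * (B 0 - P 0)) / ‖P - B‖]

namespace Matrix

theorem sum_vecMulVec_mulVec_eq_zero {ι m n α : Type*} [Fintype ι] [Fintype n]
    [NonUnitalSemiring α]
    (u : ι → m → α) (v : ι → n → α) (w : n → α) (h : ∀ k, v k ⬝ᵥ w = 0) :
    (∑ k, vecMulVec (u k) (v k)) *ᵥ w = 0 := by
  simp [sum_mulVec, vecMulVec_mulVec, h]

end Matrix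

def anchorKernelVector (B Pf : EuclideanSpace ℝ (Fin 2)) : Fin 3 → ℝ :=
  ![-(Pf 1 - B 1), Pf 0 - B 0, 1]

theorem anchorKernelVector_ne_zero (B Pf : EuclideanSpace ℝ (Fin 2)) :
    anchorKernelVector B Pf ≠ 0 :=
  fun h => by simpa [anchorKernelVector] using congrFun h 2

theorem gamma_dotProduct_anchorKernelVector (B P Pf : EuclideanSpace ℝ (Fin 2)) :
    gamma B P Pf ⬝ᵥ anchorKernelVector B Pf = 0 := by
  simp only [gamma, anchorKernelVector, dotProduct, Fin.sum_univ_three, Matrix.cons_val_zero,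
    Matrix.cons_val_one, Matrix.cons_val_two, Matrix.head_cons, Matrix.tail_cons]
  ring

/-- A single anchor always generates a singular Constructibility Gramian: the fixed
nonzero vector `v = (-(y_f - Y), x_f - X, 1)` is orthogonal to every information
vector of a measurement from anchor `B`, hence lies in the kernel of the Gramian. -/
theorem single_anchor_singular_gramian (B Pf : EuclideanSpace ℝ (Fin 2)) :
    (∀ P : EuclideanSpace ℝ (Fin 2), P ≠ B →
      ∑ i : Fin 3, gamma B P Pf i * (![-(Pf 1 - B 1), Pf 0 - B 0, 1] : Fin 3 → ℝ) i = 0) ∧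
    (∀ (N : ℕ) (P : Fin N → EuclideanSpace ℝ (Fin 2)), (∀ k, P k ≠ B) →
      (∑ k : Fin N, Matrix.vecMulVec (gamma B (P k) Pf) (gamma B (P k) Pf)).det = 0 ∧
      (∑ k : Fin N, Matrix.vecMulVec (gamma B (P k) Pf) (gamma B (P k) Pf)).mulVec
        (![-(Pf 1 - B 1), Pf 0 - B 0, 1] : Fin 3 → ℝ) = 0 ∧
      (![-(Pf 1 - B 1), Pf 0 - B 0, 1] : Fin 3 → ℝ) ≠ 0) := by
  refine ⟨fun P _ => gamma_dotProduct_anchorKernelVector B P Pf, fun N P _ => ?_⟩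
  have hker : (∑ k, Matrix.vecMulVec (gamma B (P k) Pf) (gamma B (P k) Pf)).mulVec
      (anchorKernelVector B Pf) = 0 :=
    Matrix.sum_vecMulVec_mulVec_eq_zero _ _ _ fun k => gamma_dotProduct_anchorKernelVector B _ Pf
  have hne := anchorKernelVector_ne_zero B Pf
  exact ⟨Matrix.exists_mulVec_eq_zero_iff.mp ⟨_, hne, hker⟩, hker, hne⟩
end

section
/- Let B ∈ ℝ² be an anchor, P_f ∈ ℝ² a final point, and P₀, P₁ ∈ ℝ² measurement points with P₀ ≠ B and P₁ ≠ B. Then the vectors γ(B, P₀, P_f) and γ(B, P₁, P_f) in ℝ³ are linearly dependent over ℝ if and only if B, P₀, P₁ are collinear. -/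
local notation "ℝ²" => EuclideanSpace ℝ (Fin 2)

theorem collinear_iff_not_linearIndependent_vsub {k V P : Type*} [DivisionRing k]
    [AddCommGroup V] [Module k V] [AddTorsor V P] (p₀ p₁ p₂ : P) :
    Collinear k ({p₀, p₁, p₂} : Set P) ↔ ¬ LinearIndependent k ![p₁ -ᵥ p₀, p₂ -ᵥ p₀] := by
  rw [collinear_iff_not_affineIndependent_set, affineIndependent_iff_linearIndependent_vsub k _ 0,
    ← linearIndependent_equiv (finSuccAboveEquiv 0)]
  congr! 2
  ext i
  fin_cases i <;> rfl

theorem LinearIndependent.pair_map_iff {R M M' : Type*} [Ring R] [AddCommGroup M]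
    [AddCommGroup M'] [Module R M] [Module R M'] {f : M →ₗ[R] M'} (hf : Function.Injective f)
    (x y : M) : LinearIndependent R ![f x, f y] ↔ LinearIndependent R ![x, y] := by
  rw [← f.linearIndependent_iff (LinearMap.ker_eq_bot.mpr hf)]
  congr! 1
  ext i
  fin_cases i <;> rfl

def gammaNumerator (w : ℝ²) : ℝ² →ₗ[ℝ] Fin 3 → ℝ where
  toFun d := ![d 0, d 1, w 1 * d 0 - w 0 * d 1]
  map_add' d e := by
    ext i
    fin_cases i <;> simp only [PiLp.add_apply, Pi.add_apply, Fin.zero_eta, Fin.mk_one,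
      Fin.reduceFinMk, Matrix.cons_val_zero, Matrix.cons_val_one, Matrix.cons_val]
    ring
  map_smul' c d := by
    ext i
    fin_cases i <;> simp only [PiLp.smul_apply, Pi.smul_apply, smul_eq_mul, Real.ringHom_apply,
      Fin.zero_eta, Fin.mk_one, Fin.reduceFinMk, Matrix.cons_val_zero, Matrix.cons_val_one,
      Matrix.cons_val]
    ring

theorem gammaNumerator_injective (w : ℝ²) : Function.Injective (gammaNumerator w) := by
  intro d e h
  ext i
  fin_cases i
  · exact congrFun h 0
  · exact congrFun h 1

theorem gamma_eq_smul_gammaNumerator (B P Pf : ℝ²) :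
    gamma B P Pf = ‖P - B‖⁻¹ • gammaNumerator (Pf - B) (P - B) := by
  ext i
  fin_cases i <;> simp only [gamma, gammaNumerator, LinearMap.coe_mk, AddHom.coe_mk,
    PiLp.sub_apply, Pi.smul_apply, smul_eq_mul, Fin.zero_eta, Fin.mk_one, Fin.reduceFinMk,
    Matrix.cons_val_zero, Matrix.cons_val_one, Matrix.cons_val] <;> ring

/-- Two measurements from a single anchor: the two information vectors are linearly
dependent iff the anchor and the two measurement points are collinear. -/
theorem two_measurements_single_anchor_dependent_iff_collinear
    (B Pf P0 P1 : EuclideanSpace ℝ (Fin 2)) (h0 : P0 ≠ B) (h1 : P1 ≠ B) :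
    ¬ LinearIndependent ℝ ![gamma B P0 Pf, gamma B P1 Pf] ↔
      Collinear ℝ ({B, P0, P1} : Set (EuclideanSpace ℝ (Fin 2))) := by
  have r0 : IsUnit ‖P0 - B‖⁻¹ := by simpa [sub_eq_zero] using h0
  have r1 : IsUnit ‖P1 - B‖⁻¹ := by simpa [sub_eq_zero] using h1
  rw [gamma_eq_smul_gammaNumerator, gamma_eq_smul_gammaNumerator,
    LinearIndependent.pair_smul_smul_iff r0 r1,
    LinearIndependent.pair_map_iff (gammaNumerator_injective _),
    collinear_iff_not_linearIndependent_vsub, vsub_eq_sub, vsub_eq_sub]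
end

section
/- Let B₁, B₂ ∈ ℝ² be anchors, P_f ∈ ℝ² a final point, and P₀, P₁ ∈ ℝ² measurement points with P₀ ≠ B₁ and P₁ ≠ B₂. Then the vectors γ(B₁, P₀, P_f) and γ(B₂, P₁, P_f) in ℝ³ are linearly dependent over ℝ if and only if the four points B₁, P₀, B₂, P₁ are collinear (all lie on one common affine line). -/
local notation "ℝ²" => EuclideanSpace ℝ (Fin 2)

theorem Collinear.insert_insert_iff_of_ne {k V P : Type*} [DivisionRing k] [AddCommGroup V]
    [Module k V] [AddTorsor V P] {p₁ p₂ p₃ p₄ : P} (h : p₁ ≠ p₂) :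
    Collinear k ({p₁, p₂, p₃, p₄} : Set P) ↔ p₃ ∈ line[k, p₁, p₂] ∧ p₄ ∈ line[k, p₁, p₂] := by
  refine ⟨fun hc ↦ ⟨hc.mem_affineSpan_of_mem_of_ne (by simp) (by simp) (by simp) h,
    hc.mem_affineSpan_of_mem_of_ne (by simp) (by simp) (by simp) h⟩, fun ⟨h₃, h₄⟩ ↦ ?_⟩
  convert collinear_insert_insert_of_mem_affineSpan_pair h₃ h₄ using 1
  ext
  simp only [Set.mem_insert_iff, Set.mem_singleton_iff]
  tauto

def cross (u v : ℝ²) : ℝ := u 0 * v 1 - u 1 * v 0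

theorem cross_eq_zero_iff_exists_smul {u w : ℝ²} (hu : u ≠ 0) :
    cross u w = 0 ↔ ∃ r : ℝ, r • u = w := by
  refine ⟨fun h ↦ ?_, by rintro ⟨r, rfl⟩; simp [cross]; ring⟩
  unfold cross at h
  have hu' : u 0 ≠ 0 ∨ u 1 ≠ 0 := by
    contrapose! hu
    ext i; fin_cases i <;> simp [hu]
  rcases hu' with hu0 | hu1
  · refine ⟨w 0 / u 0, ?_⟩
    ext i; fin_cases i <;> simp <;> field_simp
    linear_combination -h
  · refine ⟨w 1 / u 1, ?_⟩
    ext i; fin_cases i <;> simp <;> field_simp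
    linear_combination h

theorem mem_affineSpan_pair_iff_cross_eq_zero {B P X : ℝ²} (h : P ≠ B) :
    X ∈ line[ℝ, B, P] ↔ cross (P - B) (X - B) = 0 := by
  rw [cross_eq_zero_iff_exists_smul (sub_ne_zero.2 h), ← vsub_eq_sub P B, ← vsub_eq_sub X B,
    ← vadd_left_mem_affineSpan_pair, vsub_vadd]

def pluckerCoords (B u O : ℝ²) : Fin 3 → ℝ := ![u 0, u 1, cross u (O - B)]

theorem gamma_eq_smul_pluckerCoords (B P Pf : ℝ²) :
    gamma B P Pf = ‖P - B‖⁻¹ • pluckerCoords B (P - B) Pf := by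
  ext i; fin_cases i <;> simp [gamma, pluckerCoords, cross] <;> ring

theorem smul_pluckerCoords (r : ℝ) (B u O : ℝ²) :
    r • pluckerCoords B u O = pluckerCoords B (r • u) O := by
  ext i; fin_cases i <;> simp [pluckerCoords, cross]; ring

theorem pluckerCoords_eq_iff {B B' u u' O : ℝ²} :
    pluckerCoords B u O = pluckerCoords B' u' O ↔ u = u' ∧ cross u (B' - B) = 0 := by
  simp only [pluckerCoords, Matrix.vecCons_inj, and_true, PiLp.ext_iff, Fin.forall_fin_two]
  constructor
  · rintro ⟨h0, h1, h2⟩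
    refine ⟨⟨h0, h1⟩, ?_⟩
    simp only [cross, PiLp.sub_apply] at *
    rw [h0, h1] at h2 ⊢
    linear_combination h2
  · rintro ⟨⟨h0, h1⟩, h2⟩
    refine ⟨h0, h1, ?_⟩
    simp only [cross, PiLp.sub_apply] at *
    rw [← h0, ← h1]
    linear_combination h2

theorem not_linearIndependent_pluckerCoords_iff {B B' u u' O : ℝ²} (hu' : u' ≠ 0) :
    ¬ LinearIndependent ℝ ![pluckerCoords B u O, pluckerCoords B' u' O] ↔
      (∃ t : ℝ, t • u' = u) ∧ cross u (B' - B) = 0 := by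
  have hne : pluckerCoords B' u' O ≠ 0 := fun h ↦ hu' <| by
    ext i; fin_cases i
    · simpa [pluckerCoords] using congrFun h 0
    · simpa [pluckerCoords] using congrFun h 1
  simp only [linearIndependent_fin2, Matrix.cons_val_one, Matrix.cons_val_zero, ne_eq, hne,
    not_false_eq_true, true_and, not_forall, not_not, smul_pluckerCoords]
  constructor
  · rintro ⟨t, ht⟩
    obtain ⟨rfl, h⟩ := pluckerCoords_eq_iff.1 ht.symm
    exact ⟨⟨t, rfl⟩, h⟩
  · rintro ⟨⟨t, rfl⟩, h⟩
    exact ⟨t, (pluckerCoords_eq_iff.2 ⟨rfl, h⟩).symm⟩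

/-- 1+1 local analysis: the two information vectors are linearly dependent iff the two
anchors and the two measurement points all lie on one common line. -/
theorem one_plus_one_dependent_iff_collinear
    (B1 B2 Pf P0 P1 : EuclideanSpace ℝ (Fin 2)) (h0 : P0 ≠ B1) (h1 : P1 ≠ B2) :
    ¬ LinearIndependent ℝ ![gamma B1 P0 Pf, gamma B2 P1 Pf] ↔
      Collinear ℝ ({B1, P0, B2, P1} : Set (EuclideanSpace ℝ (Fin 2))) := by
  have ha : P0 - B1 ≠ 0 := sub_ne_zero.2 h0
  have hb : P1 - B2 ≠ 0 := sub_ne_zero.2 h1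
  rw [gamma_eq_smul_pluckerCoords, gamma_eq_smul_pluckerCoords,
    LinearIndependent.pair_smul_smul_iff (inv_ne_zero (norm_ne_zero_iff.2 ha)).isUnit
      (inv_ne_zero (norm_ne_zero_iff.2 hb)).isUnit,
    not_linearIndependent_pluckerCoords_iff hb, ← cross_eq_zero_iff_exists_smul hb,
    Collinear.insert_insert_iff_of_ne h0.symm, mem_affineSpan_pair_iff_cross_eq_zero h0,
    mem_affineSpan_pair_iff_cross_eq_zero h0]
  have hP1 : cross (P0 - B1) (P1 - B1) =
      cross (P0 - B1) (B2 - B1) - cross (P1 - B2) (P0 - B1) := by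
    simp only [cross, PiLp.sub_apply]; ring
  rw [hP1]
  constructor <;> rintro ⟨h, h'⟩ <;> constructor <;> linarith
end

section
/- Let B₁ ≠ B₂ ∈ ℝ² be anchors and P_f ∈ ℝ² a final point. Let P₀, P₁ ∈ ℝ² with P₀ ≠ B₁, P₁ ≠ B₁ and B₁, P₀, P₁ non-collinear, and let P₂, P₃ ∈ ℝ² with P₂ ≠ B₂, P₃ ≠ B₂ and B₂, P₂, P₃ non-collinear. Then the four vectors γ(B₁, P₀, P_f), γ(B₁, P₁, P_f), γ(B₂, P₂, P_f), γ(B₂, P₃, P_f) span ℝ³; equivalently, the Constructibility Gramian Σ γγᵀ of these four measurements is nonsingular. -/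
private lemma euc_ne_iff {P B : EuclideanSpace ℝ (Fin 2)} (h : P ≠ B) :
    P 0 - B 0 ≠ 0 ∨ P 1 - B 1 ≠ 0 := by
  by_contra hc
  push_neg at hc
  obtain ⟨hc0, hc1⟩ := hc
  apply h
  ext i
  fin_cases i
  · show P 0 = B 0; linarith
  · show P 1 = B 1; linarith

private lemma cross_ne_of_not_collinear {B P Q : EuclideanSpace ℝ (Fin 2)}
    (hP : P ≠ B) (h : ¬ Collinear ℝ ({B, P, Q} : Set (EuclideanSpace ℝ (Fin 2)))) :
    (P 0 - B 0) * (Q 1 - B 1) - (P 1 - B 1) * (Q 0 - B 0) ≠ 0 := by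
  intro hcross
  apply h
  rw [collinear_iff_of_mem (Set.mem_insert B {P, Q})]
  refine ⟨P - B, ?_⟩
  intro p hp
  have key : ∀ t : ℝ, p 0 - B 0 = t * (P 0 - B 0) → p 1 - B 1 = t * (P 1 - B 1) →
      p = t • (P - B) +ᵥ B := by
    intro t ht0 ht1
    ext i
    fin_cases i
    · show p 0 = (t • (P - B) + B) 0
      simp only [PiLp.add_apply, PiLp.smul_apply, PiLp.sub_apply, smul_eq_mul]
      linarith
    · show p 1 = (t • (P - B) + B) 1
      simp only [PiLp.add_apply, PiLp.smul_apply, PiLp.sub_apply, smul_eq_mul]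
      linarith
  rcases hp with rfl | rfl | rfl
  · exact ⟨0, key 0 (by ring) (by ring)⟩
  · exact ⟨1, key 1 (by ring) (by ring)⟩
  · rcases euc_ne_iff hP with h0 | h1
    · refine ⟨(p 0 - B 0) / (P 0 - B 0), key _ (by field_simp) ?_⟩
      field_simp
      nlinarith [hcross]
    · refine ⟨(p 1 - B 1) / (P 1 - B 1), key _ ?_ (by field_simp)⟩
      field_simp
      nlinarith [hcross]

private lemma norm_sub_ne {P B : EuclideanSpace ℝ (Fin 2)} (h : P ≠ B) : ‖P - B‖ ≠ 0 := by
  simpa [sub_eq_zero] using h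

private lemma vecMul_eq_sum' {m n : ℕ} (v : Fin m → ℝ) (M : Matrix (Fin m) (Fin n) ℝ) :
    Matrix.vecMul v M = ∑ i, v i • M i := by
  funext j
  simp [Matrix.vecMul, dotProduct, Finset.sum_apply, mul_comm]

/-- If three vectors form a matrix with nonzero determinant, they span. -/
private lemma span_top_of_det_ne {g0 g1 g2 : Fin 3 → ℝ}
    (h : (Matrix.of ![g0, g1, g2]).det ≠ 0) :
    Submodule.span ℝ ({g0, g1, g2} : Set (Fin 3 → ℝ)) = ⊤ := by
  set M : Matrix (Fin 3) (Fin 3) ℝ := Matrix.of ![g0, g1, g2] with hM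
  rw [eq_top_iff]
  intro x _
  have hinv : M⁻¹ * M = 1 := Matrix.nonsing_inv_mul M (isUnit_iff_ne_zero.mpr h)
  have hx : x = Matrix.vecMul (Matrix.vecMul x M⁻¹) M := by
    rw [Matrix.vecMul_vecMul, hinv, Matrix.vecMul_one]
  rw [hx, vecMul_eq_sum']
  apply Submodule.sum_mem
  intro i _
  apply Submodule.smul_mem
  apply Submodule.subset_span
  fin_cases i
  · exact Set.mem_insert _ _
  · exact Set.mem_insert_of_mem _ (Set.mem_insert _ _)
  · exact Set.mem_insert_of_mem _ (Set.mem_insert_of_mem _ rfl)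

private lemma main_span (B1 B2 Pf P0 P1 Pc : EuclideanSpace ℝ (Fin 2))
    (h0 : P0 ≠ B1) (h1 : P1 ≠ B1) (hc : Pc ≠ B2)
    (hab : (P0 0 - B1 0) * (P1 1 - B1 1) - (P0 1 - B1 1) * (P1 0 - B1 0) ≠ 0)
    (hcv : (Pc 0 - B2 0) * (B1 1 - B2 1) - (Pc 1 - B2 1) * (B1 0 - B2 0) ≠ 0) :
    Submodule.span ℝ ({gamma B1 P0 Pf, gamma B1 P1 Pf, gamma B2 Pc Pf} :
      Set (Fin 3 → ℝ)) = ⊤ := by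
  apply span_top_of_det_ne
  rw [Matrix.det_fin_three]
  have r0 := norm_sub_ne h0
  have r1 := norm_sub_ne h1
  have rc := norm_sub_ne hc
  simp only [Matrix.of_apply, Matrix.cons_val', Matrix.cons_val_zero, Matrix.cons_val_one,
    Matrix.head_cons, Matrix.empty_val', Matrix.cons_val_fin_one, Matrix.head_fin_const,
    gamma, Matrix.cons_val_two, Matrix.tail_cons]
  have key : (gamma B1 P0 Pf 0) * (gamma B1 P1 Pf 1) * (gamma B2 Pc Pf 2) = 0 → True := fun _ => trivial
  rw [div_mul_div_comm, div_mul_div_comm, div_mul_div_comm, div_mul_div_comm,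
    div_mul_div_comm, div_mul_div_comm, div_mul_div_comm, div_mul_div_comm,
    div_mul_div_comm, div_mul_div_comm, div_mul_div_comm, div_mul_div_comm]
  intro hdet
  have hprod : ((P0 0 - B1 0) * (P1 1 - B1 1) - (P0 1 - B1 1) * (P1 0 - B1 0)) *
      ((Pc 0 - B2 0) * (B1 1 - B2 1) - (Pc 1 - B2 1) * (B1 0 - B2 0)) ≠ 0 :=
    mul_ne_zero hab hcv
  apply hprod
  have hden : ‖P0 - B1‖ * (‖P1 - B1‖ * ‖Pc - B2‖) ≠ 0 :=
    mul_ne_zero r0 (mul_ne_zero r1 rc)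
  field_simp at hdet
  nlinarith [hdet, sq_nonneg (‖P0 - B1‖ * ‖P1 - B1‖ * ‖Pc - B2‖)]

/-- 2+2 local analysis: two distinct anchors each collecting a pair of measurements at
points not aligned with the respective anchor yield information vectors spanning
`ℝ³`, equivalently a nonsingular Constructibility Gramian. -/
theorem two_plus_two_full_rank_gramian
    (B1 B2 Pf : EuclideanSpace ℝ (Fin 2)) (hB : B1 ≠ B2)
    (P0 P1 : EuclideanSpace ℝ (Fin 2)) (h0 : P0 ≠ B1) (h1 : P1 ≠ B1)
    (hnc1 : ¬ Collinear ℝ ({B1, P0, P1} : Set (EuclideanSpace ℝ (Fin 2))))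
    (P2 P3 : EuclideanSpace ℝ (Fin 2)) (h2 : P2 ≠ B2) (h3 : P3 ≠ B2)
    (hnc2 : ¬ Collinear ℝ ({B2, P2, P3} : Set (EuclideanSpace ℝ (Fin 2)))) :
    Submodule.span ℝ ({gamma B1 P0 Pf, gamma B1 P1 Pf, gamma B2 P2 Pf, gamma B2 P3 Pf} :
        Set (Fin 3 → ℝ)) = ⊤ ∧
    (Matrix.vecMulVec (gamma B1 P0 Pf) (gamma B1 P0 Pf) +
      Matrix.vecMulVec (gamma B1 P1 Pf) (gamma B1 P1 Pf) +
      Matrix.vecMulVec (gamma B2 P2 Pf) (gamma B2 P2 Pf) +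
      Matrix.vecMulVec (gamma B2 P3 Pf) (gamma B2 P3 Pf)).det ≠ 0 := by
  have hab := cross_ne_of_not_collinear h0 hnc1
  have hcd := cross_ne_of_not_collinear h2 hnc2
  have hv := euc_ne_iff hB
  -- one of P2, P3 gives a nonzero cross with B1 - B2
  have hone : ((P2 0 - B2 0) * (B1 1 - B2 1) - (P2 1 - B2 1) * (B1 0 - B2 0) ≠ 0) ∨
      ((P3 0 - B2 0) * (B1 1 - B2 1) - (P3 1 - B2 1) * (B1 0 - B2 0) ≠ 0) := by
    by_contra hcon
    push_neg at hcon
    obtain ⟨e2, e3⟩ := hcon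
    apply hcd
    rcases hv with hv0 | hv1
    · have hmu : ((P2 0 - B2 0) * (P3 1 - B2 1) - (P2 1 - B2 1) * (P3 0 - B2 0)) *
          (B1 0 - B2 0) = 0 := by
        linear_combination (P3 0 - B2 0) * e2 - (P2 0 - B2 0) * e3
      exact (mul_eq_zero.mp hmu).resolve_right hv0
    · have hmu : ((P2 0 - B2 0) * (P3 1 - B2 1) - (P2 1 - B2 1) * (P3 0 - B2 0)) *
          (B1 1 - B2 1) = 0 := by
        linear_combination (P3 1 - B2 1) * e2 - (P2 1 - B2 1) * e3
      exact (mul_eq_zero.mp hmu).resolve_right hv1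
  have hspan : Submodule.span ℝ
      ({gamma B1 P0 Pf, gamma B1 P1 Pf, gamma B2 P2 Pf, gamma B2 P3 Pf} :
        Set (Fin 3 → ℝ)) = ⊤ := by
    rw [eq_top_iff]
    rcases hone with hcv | hcv
    · rw [← main_span B1 B2 Pf P0 P1 P2 h0 h1 h2 hab hcv]
      apply Submodule.span_mono
      intro x hx
      rcases hx with rfl | rfl | rfl
      · exact Set.mem_insert _ _
      · exact Set.mem_insert_of_mem _ (Set.mem_insert _ _)
      · exact Set.mem_insert_of_mem _ (Set.mem_insert_of_mem _ (Set.mem_insert _ _))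
    · rw [← main_span B1 B2 Pf P0 P1 P3 h0 h1 h3 hab hcv]
      apply Submodule.span_mono
      intro x hx
      rcases hx with rfl | rfl | rfl
      · exact Set.mem_insert _ _
      · exact Set.mem_insert_of_mem _ (Set.mem_insert _ _)
      · exact Set.mem_insert_of_mem _ (Set.mem_insert_of_mem _
          (Set.mem_insert_of_mem _ rfl))
  refine ⟨hspan, ?_⟩
  intro hdet
  obtain ⟨v, hv0, hGv⟩ := (Matrix.exists_mulVec_eq_zero_iff).mpr hdet
  have hsq : ∀ a : Fin 3 → ℝ,
      dotProduct v ((Matrix.vecMulVec a a).mulVec v) = (dotProduct a v) ^ 2 := by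
    intro a
    simp [Matrix.mulVec, Matrix.vecMulVec, dotProduct, Fin.sum_univ_three]
    ring
  have hzero : dotProduct (gamma B1 P0 Pf) v = 0 ∧
      dotProduct (gamma B1 P1 Pf) v = 0 ∧
      dotProduct (gamma B2 P2 Pf) v = 0 ∧
      dotProduct (gamma B2 P3 Pf) v = 0 := by
    have hq : dotProduct v
        (((Matrix.vecMulVec (gamma B1 P0 Pf) (gamma B1 P0 Pf) +
        Matrix.vecMulVec (gamma B1 P1 Pf) (gamma B1 P1 Pf) +
        Matrix.vecMulVec (gamma B2 P2 Pf) (gamma B2 P2 Pf) +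
        Matrix.vecMulVec (gamma B2 P3 Pf) (gamma B2 P3 Pf))).mulVec v) = 0 := by
      rw [hGv, dotProduct_zero]
    rw [Matrix.add_mulVec, Matrix.add_mulVec, Matrix.add_mulVec,
      dotProduct_add, dotProduct_add, dotProduct_add,
      hsq, hsq, hsq, hsq] at hq
    refine ⟨?_, ?_, ?_, ?_⟩ <;> nlinarith [sq_nonneg (dotProduct (gamma B1 P0 Pf) v),
      sq_nonneg (dotProduct (gamma B1 P1 Pf) v),
      sq_nonneg (dotProduct (gamma B2 P2 Pf) v),
      sq_nonneg (dotProduct (gamma B2 P3 Pf) v)]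
  obtain ⟨hz0, hz1, hz2, hz3⟩ := hzero
  apply hv0
  rw [← dotProduct_self_eq_zero (v := v)]
  have hvmem : v ∈ Submodule.span ℝ
      ({gamma B1 P0 Pf, gamma B1 P1 Pf, gamma B2 P2 Pf, gamma B2 P3 Pf} :
        Set (Fin 3 → ℝ)) := by rw [hspan]; trivial
  refine Submodule.span_induction
    (p := fun x _ => dotProduct x v = 0) ?_ ?_ ?_ ?_ hvmem
  · intro x hx
    rcases hx with rfl | rfl | rfl | rfl
    · exact hz0
    · exact hz1
    · exact hz2
    · exact hz3
  · exact zero_dotProduct v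
  · intro x y _ _ hx hy
    rw [add_dotProduct, hx, hy, add_zero]
  · intro a x _ hx
    rw [smul_dotProduct, hx, smul_zero]
end
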